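/- Let (L_t)_{t ≥ 1} be independent, identically distributed, strictly positive (a.s.), integrable random variables with E[L_1] = 1. Define the CuSum statistic c_0 = 0, c_t = max(c_{t−1} + log L_t, 0), and for b > 0 let T = inf{ t ≥ 1 : c_t ≥ b } (with inf ∅ = ∞). Then E[T] ≥ e^{b}. -/

import Mathlib

/-!
The Shiryaev–Roberts statistic `R_n = (R_{n-1} + 1) L_n`, `R_0 = 0`, dominates the CuSum
statistic: `e^{c_n} ≤ max R_n 1`. Since `L_n` has mean one and is independent of the past,
`R_n - n` is a martingale, so stopping it at `T` gives `E[R_{min n T}] = E[min n T] ≤ E[T]`.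
At the alarm `R_T ≥ e^{c_T} ≥ e^b > 1`, hence `e^b P(T ≤ n) ≤ E[T]` for every `n`; letting
`n → ∞` gives the bound when `T < ∞` a.s., and otherwise `E[T] = ∞`.
-/

open MeasureTheory ProbabilityTheory
open scoped ENNReal

noncomputable section

namespace QCDStmt

/-- The CuSum recursion driven by the log-likelihood ratios `log (L t)`:
`c 0 = 0`, `c (t+1) = max (c t + log (L t)) 0`
(here `L t` is the likelihood ratio of the `(t+1)`-st observation). -/
def cusumLog {Ω : Type*} (L : ℕ → Ω → ℝ) : ℕ → Ω → ℝ
  | 0 => fun _ => 0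
  | t + 1 => fun ω => max (cusumLog L t ω + Real.log (L t ω)) 0

/-- The CuSum stopping time `T = inf {t ≥ 1 : c t ≥ b}` (with `inf ∅ = ∞`). -/
def cusumHit {Ω : Type*} (L : ℕ → Ω → ℝ) (b : ℝ) (ω : Ω) : ℕ∞ :=
  sInf {s : ℕ∞ | ∃ t : ℕ, s = (t : ℕ∞) ∧ 1 ≤ t ∧ b ≤ cusumLog L t ω}

end QCDStmt

theorem ProbabilityTheory.iIndepFun.indepFun_comp_of_dependsOn
    {Ω ι γ : Type*} {β : ι → Type*} [MeasurableSpace Ω] [∀ i, MeasurableSpace (β i)]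
    [MeasurableSpace γ] {μ : Measure Ω} {X : ∀ i, Ω → β i} (hX : iIndepFun X μ)
    (hXm : ∀ i, Measurable (X i)) {g : (∀ i, β i) → γ} (hg : Measurable g) {s : Finset ι}
    (hgs : DependsOn g s) {i : ι} (hi : i ∉ s) :
    IndepFun (fun ω => g (fun j => X j ω)) (X i) μ := by
  classical
  rcases isEmpty_or_nonempty Ω with hΩ | ⟨⟨ω₀⟩⟩
  · rw [indepFun_iff_measure_inter_preimage_eq_mul]
    simp [Measure.eq_zero_of_isEmpty μ]
  have hindep := (hX.indepFun_finset s {i} (Finset.disjoint_singleton_right.2 hi) hXm).comp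
    (hg.comp (measurable_updateFinset (x := fun j => X j ω₀)))
    (measurable_pi_apply (⟨i, Finset.mem_singleton_self i⟩ : ({i} : Finset ι)))
  convert hindep using 1
  · funext ω
    exact hgs fun j hj => by simp [Function.updateFinset, Finset.mem_coe.1 hj]
  · rfl

lemma MeasureTheory.sum_measure_lt_le_lintegral {Ω : Type*} [MeasurableSpace Ω] {μ : Measure Ω}
    {τ : Ω → ℕ∞} (hτ : Measurable τ) (n : ℕ) :
    ∑ k ∈ Finset.range n, μ {ω | (k : ℕ∞) < τ ω} ≤ ∫⁻ ω, (τ ω : ℝ≥0∞) ∂μ := by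
  have hcount (t : ℕ∞) :
      ∑ k ∈ Finset.range n, (if (k : ℕ∞) < t then (1 : ℝ≥0∞) else 0) ≤ (t : ℝ≥0∞) := by
    induction t using ENat.recTopCoe with
    | top => simp
    | coe m =>
      calc ∑ k ∈ Finset.range n, (if (k : ℕ∞) < m then (1 : ℝ≥0∞) else 0)
          = ((Finset.range n).filter (· < m)).card := by simp
        _ ≤ (Finset.range m).card := by gcongr; intro k; simp
        _ = m := by simp
  have hτk (k : ℕ) : MeasurableSet {ω | (k : ℕ∞) < τ ω} :=
    hτ (.of_discrete (s := Set.Ioi (k : ℕ∞)))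
  calc ∑ k ∈ Finset.range n, μ {ω | (k : ℕ∞) < τ ω}
      = ∫⁻ ω, ∑ k ∈ Finset.range n, {ω | (k : ℕ∞) < τ ω}.indicator 1 ω ∂μ := by
        rw [lintegral_finsetSum _ fun k _ => measurable_one.indicator (hτk k)]
        simp [lintegral_indicator_one (hτk _)]
    _ ≤ _ := lintegral_mono fun ω => by simpa [Set.indicator_apply] using hcount (τ ω)

lemma MeasureTheory.le_lintegral_of_forall_mul_measure_le {Ω : Type*} [MeasurableSpace Ω]
    {μ : Measure Ω} [IsProbabilityMeasure μ] {τ : Ω → ℕ∞} (hτ : Measurable τ) {c : ℝ≥0∞}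
    (h : ∀ n : ℕ, c * μ {ω | τ ω ≤ n} ≤ ∫⁻ ω, (τ ω : ℝ≥0∞) ∂μ) :
    c ≤ ∫⁻ ω, (τ ω : ℝ≥0∞) ∂μ := by
  by_cases htop : μ {ω | τ ω = ⊤} = 0
  · have hfin : μ (⋃ n : ℕ, {ω | τ ω ≤ n}) = 1 := by
      have hU : (⋃ n : ℕ, {ω | τ ω ≤ n}) = {ω | τ ω = ⊤}ᶜ := by
        ext ω
        simp only [Set.mem_iUnion, Set.mem_ofPred_eq, Set.mem_compl_iff]
        constructor
        · rintro ⟨n, hn⟩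
          exact ne_top_of_le_ne_top (ENat.natCast_ne_top n) hn
        · intro h
          obtain ⟨m, hm⟩ := ENat.ne_top_iff_exists.1 h
          exact ⟨m, hm.ge⟩
      rw [hU]
      exact (prob_compl_eq_one_iff (hτ (measurableSet_singleton ⊤))).2 htop
    have hmono : Monotone fun n : ℕ => {ω | τ ω ≤ n} := fun m n hmn ω (hω : τ ω ≤ m) =>
      hω.trans (by exact_mod_cast hmn)
    rw [← mul_one c, ← hfin, hmono.measure_iUnion, ENNReal.mul_iSup]
    exact iSup_le h
  · rw [lintegral_eq_top_of_measure_eq_top_ne_zero (f := fun ω => (τ ω : ℝ≥0∞))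
      (measurable_from_top.comp hτ).aemeasurable (by simpa using htop)]
    exact le_top

namespace QCDStmt

section Cusum

variable {Ω : Type*}

lemma cusumLog_comp {Ω' : Type*} (L : ℕ → Ω → ℝ) (φ : Ω' → Ω) :
    ∀ t, cusumLog (fun i => L i ∘ φ) t = cusumLog L t ∘ φ
  | 0 => rfl
  | t + 1 => by
    funext ω
    simp only [cusumLog, cusumLog_comp L φ t, Function.comp_apply]

lemma cusumHit_comp {Ω' : Type*} (L : ℕ → Ω → ℝ) (φ : Ω' → Ω) (b : ℝ) (ω : Ω') :
    cusumHit (fun i => L i ∘ φ) b ω = cusumHit L b (φ ω) := by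
  simp only [cusumHit, cusumLog_comp, Function.comp_apply]

lemma measurable_cusumLog [MeasurableSpace Ω] {L : ℕ → Ω → ℝ} (hL : ∀ t, Measurable (L t)) :
    ∀ t, Measurable (cusumLog L t)
  | 0 => measurable_const
  | t + 1 => ((measurable_cusumLog hL t).add (Real.measurable_log.comp (hL t))).max
      measurable_const

lemma exists_cusumHit_eq {L : ℕ → Ω → ℝ} {b : ℝ} {ω : Ω} (h : cusumHit L b ω ≠ ⊤) :
    ∃ t : ℕ, cusumHit L b ω = t ∧ 1 ≤ t ∧ b ≤ cusumLog L t ω := by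
  have hne : {s : ℕ∞ | ∃ t : ℕ, s = t ∧ 1 ≤ t ∧ b ≤ cusumLog L t ω}.Nonempty := by
    by_contra hemp
    exact h (by rw [cusumHit, Set.not_nonempty_iff_eq_empty.1 hemp, sInf_empty])
  exact csInf_mem hne

lemma cusumHit_le_iff {L : ℕ → Ω → ℝ} {b : ℝ} {ω : Ω} {n : ℕ} :
    cusumHit L b ω ≤ n ↔ ∃ t ≤ n, 1 ≤ t ∧ b ≤ cusumLog L t ω := by
  constructor
  · intro h
    obtain ⟨t, ht, h1, hb⟩ := exists_cusumHit_eq (ne_top_of_le_ne_top (ENat.natCast_ne_top n) h)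
    rw [ht, Nat.cast_le] at h
    exact ⟨t, h, h1, hb⟩
  · rintro ⟨t, htn, h1, hb⟩
    have hmem : (t : ℕ∞) ∈ {s : ℕ∞ | ∃ t : ℕ, s = t ∧ 1 ≤ t ∧ b ≤ cusumLog L t ω} :=
      ⟨t, rfl, h1, hb⟩
    exact (sInf_le hmem).trans (Nat.cast_le.2 htn)

lemma measurable_cusumHit [MeasurableSpace Ω] {L : ℕ → Ω → ℝ} (hL : ∀ t, Measurable (L t))
    (b : ℝ) : Measurable (cusumHit L b) := by
  have : BorelSpace ℕ∞ := ⟨borel_eq_top_of_countable.symm⟩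
  refine measurable_of_Iic fun s => ?_
  induction s using ENat.recTopCoe with
  | top => simp
  | coe n =>
    simp only [Set.preimage, Set.mem_Iic, cusumHit_le_iff]
    exact measurableSet_setOfPred.2 <| Measurable.exists fun t =>
      measurable_const.and <| measurable_const.and <|
        measurableSet_setOfPred.1 (measurableSet_le measurable_const (measurable_cusumLog hL t))

-- Adaptedness is expressed on sequence space `ℕ → ℝ`, driven by the coordinate process
-- `Function.eval`: a function is determined by the first `n` observations iff it
-- `DependsOn` `Set.Iio n`.
lemma dependsOn_cusumLog_eval (t : ℕ) :
    DependsOn (cusumLog (Function.eval : ℕ → (ℕ → ℝ) → ℝ) t) (Set.Iio t) := by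
  induction t with
  | zero => exact fun _ _ _ => rfl
  | succ t ih =>
    intro x y h
    simp only [cusumLog, Function.eval]
    rw [ih fun i hi => h i (Set.Iio_subset_Iio t.le_succ hi), h t (Nat.lt_succ_self t)]

lemma dependsOn_cusumHit_eval_le (b : ℝ) (n : ℕ) :
    DependsOn (fun x => cusumHit (Function.eval : ℕ → (ℕ → ℝ) → ℝ) b x ≤ n) (Set.Iio n) := by
  intro x y h
  simp only [cusumHit_le_iff]
  refine propext <| exists_congr fun t => and_congr_right fun htn => ?_
  rw [dependsOn_cusumLog_eval t fun i hi => h i (lt_of_lt_of_le hi htn)]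

end Cusum

/-- The Shiryaev–Roberts statistic `R_{n+1} = (R_n + 1) L_{n+1}`, `R_0 = 0`, stopped at `τ`:
`stoppedSR τ n x = R_{min n (τ x)}`. -/
def stoppedSR (τ : (ℕ → ℝ) → ℕ∞) : ℕ → (ℕ → ℝ) → ℝ≥0∞
  | 0 => fun _ => 0
  | n + 1 => fun x =>
      if τ x ≤ n then stoppedSR τ n x else (stoppedSR τ n x + 1) * ENNReal.ofReal (x n)

section StoppedSR

variable {τ : (ℕ → ℝ) → ℕ∞}

lemma measurable_stoppedSR (hτ : Measurable τ) : ∀ n, Measurable (stoppedSR τ n)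
  | 0 => measurable_const
  | n + 1 => Measurable.ite (hτ (.of_discrete (s := Set.Iic (n : ℕ∞))))
      (measurable_stoppedSR hτ n)
      (((measurable_stoppedSR hτ n).add_const 1).mul
        (ENNReal.measurable_ofReal.comp (measurable_pi_apply n)))

lemma dependsOn_stoppedSR (hτ : ∀ n : ℕ, DependsOn (fun x => τ x ≤ n) (Set.Iio n)) :
    ∀ n, DependsOn (stoppedSR τ n) (Set.Iio n)
  | 0 => fun _ _ _ => rfl
  | n + 1 => fun x y h => by
    have h' : ∀ i ∈ Set.Iio n, x i = y i := fun i hi => h i (Set.Iio_subset_Iio n.le_succ hi)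
    have hτn : (τ x ≤ n) = (τ y ≤ n) := hτ n h'
    simp only [stoppedSR, hτn, dependsOn_stoppedSR hτ n h', h n (Nat.lt_succ_self n)]

lemma stoppedSR_eq_of_le {x : ℕ → ℝ} {m n : ℕ} (hτ : τ x ≤ m) (hmn : m ≤ n) :
    stoppedSR τ n x = stoppedSR τ m x := by
  induction n, hmn using Nat.le_induction with
  | base => rfl
  | succ n hmn ih => simp only [stoppedSR, if_pos (hτ.trans (Nat.cast_le.2 hmn)), ih]

lemma ofReal_exp_cusumLog_le {x : ℕ → ℝ} (hx : ∀ i, 0 < x i) :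
    ∀ n : ℕ, (n : ℕ∞) ≤ τ x →
      ENNReal.ofReal (Real.exp (cusumLog Function.eval n x)) ≤ max (stoppedSR τ n x) 1
  | 0, _ => by simp [cusumLog, stoppedSR]
  | n + 1, h => by
    have hn : ¬ τ x ≤ n := not_le.2 (lt_of_lt_of_le (Nat.cast_lt.2 n.lt_succ_self) h)
    have ih := ofReal_exp_cusumLog_le hx n (le_trans (Nat.cast_le.2 n.le_succ) h)
    have hexp : Real.exp (cusumLog Function.eval (n + 1) x)
        = max (Real.exp (cusumLog Function.eval n x) * x n) 1 := by
      rw [cusumLog, Real.exp_monotone.map_max, Real.exp_add, Function.eval,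
        Real.exp_log (hx n), Real.exp_zero]
    rw [hexp, ENNReal.ofReal_max, ENNReal.ofReal_one, ENNReal.ofReal_mul (Real.exp_nonneg _)]
    simp only [stoppedSR, if_neg hn]
    gcongr
    exact ih.trans (max_le le_self_add le_add_self)

lemma ofReal_exp_le_stoppedSR_cusumHit {b : ℝ} (hb : 0 < b) {x : ℕ → ℝ} (hx : ∀ i, 0 < x i)
    {n : ℕ} (h : cusumHit Function.eval b x ≤ n) :
    ENNReal.ofReal (Real.exp b) ≤ stoppedSR (cusumHit Function.eval b) n x := by
  obtain ⟨m, hm, -, hbm⟩ := exists_cusumHit_eq (ne_top_of_le_ne_top (ENat.natCast_ne_top n) h)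
  rw [stoppedSR_eq_of_le hm.le (Nat.cast_le.1 (hm ▸ h))]
  have hexp : ENNReal.ofReal (Real.exp b) ≤ max (stoppedSR (cusumHit Function.eval b) m x) 1 :=
    (ENNReal.ofReal_le_ofReal (Real.exp_le_exp.2 hbm)).trans (ofReal_exp_cusumLog_le hx m hm.ge)
  have hone : 1 < ENNReal.ofReal (Real.exp b) := by
    simpa using Real.one_lt_exp_iff.2 hb
  exact (le_max_iff.1 hexp).resolve_right (not_le.2 hone)

end StoppedSR

section Expectation

variable {Ω : Type*} [MeasurableSpace Ω] {P : Measure Ω} {L : ℕ → Ω → ℝ} {τ : (ℕ → ℝ) → ℕ∞}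

lemma lintegral_stoppedSR_succ (hmeas : ∀ t, Measurable (L t)) (hindep : iIndepFun L P)
    (hτ : Measurable τ) (hτdep : ∀ n : ℕ, DependsOn (fun x => τ x ≤ n) (Set.Iio n)) {n : ℕ}
    (hLn : ∫⁻ ω, ENNReal.ofReal (L n ω) ∂P = 1) :
    ∫⁻ ω, stoppedSR τ (n + 1) (fun i => L i ω) ∂P
      = ∫⁻ ω, stoppedSR τ n (fun i => L i ω) ∂P + P {ω | n < τ (fun i => L i ω)} := by
  set X : Ω → ℕ → ℝ := fun ω i => L i ω
  have hX : Measurable X := measurable_pi_lambda _ hmeas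
  set A : Set Ω := {ω | n < τ (X ω)}
  have hA : MeasurableSet A := hX (hτ (.of_discrete (s := Set.Ioi (n : ℕ∞))))
  let g : (ℕ → ℝ) → ℝ≥0∞ := {x | n < τ x}.indicator fun x => stoppedSR τ n x + 1
  have hg : Measurable g := ((measurable_stoppedSR hτ n).add_const 1).indicator
    (hτ (.of_discrete (s := Set.Ioi (n : ℕ∞))))
  have hgdep : DependsOn g (Finset.range n) := by
    intro x y h
    rw [Finset.coe_range] at h
    have hτn : (τ x ≤ n) = (τ y ≤ n) := hτdep n h
    simp only [g, Set.indicator_apply, Set.mem_ofPred_eq, ← not_le, hτn,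
      dependsOn_stoppedSR hτdep n h]
  have hind : IndepFun (fun ω => g (X ω)) (fun ω => ENNReal.ofReal (L n ω)) P :=
    (hindep.indepFun_comp_of_dependsOn hmeas hg hgdep (by simp)).comp measurable_id
      ENNReal.measurable_ofReal
  have hfresh : ∫⁻ ω in A, (stoppedSR τ n (X ω) + 1) * ENNReal.ofReal (L n ω) ∂P
      = ∫⁻ ω in A, (stoppedSR τ n (X ω) + 1) ∂P := by
    rw [← lintegral_indicator hA, ← lintegral_indicator hA]
    simp_rw [Set.indicator_mul_left]
    refine (lintegral_mul_eq_lintegral_mul_lintegral_of_indepFun (hg.comp hX)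
      (ENNReal.measurable_ofReal.comp (hmeas n)) hind).trans ?_
    simp only [Function.comp_apply, hLn, mul_one]
    rfl
  calc ∫⁻ ω, stoppedSR τ (n + 1) (X ω) ∂P
      = ∫⁻ ω in A, (stoppedSR τ n (X ω) + 1) * ENNReal.ofReal (L n ω) ∂P
        + ∫⁻ ω in Aᶜ, stoppedSR τ n (X ω) ∂P := by
        rw [← lintegral_add_compl _ hA]
        congr 1
        · refine setLIntegral_congr_fun hA fun ω (hω : n < τ (X ω)) => ?_
          simp only [stoppedSR, if_neg (not_le.2 hω)]
          rfl
        · refine setLIntegral_congr_fun hA.compl fun ω (hω : ¬ n < τ (X ω)) => ?_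
          simp only [stoppedSR, if_pos (not_lt.1 hω)]
    _ = ∫⁻ ω, stoppedSR τ n (X ω) ∂P + P A := by
        rw [hfresh, lintegral_add_right _ measurable_const, setLIntegral_const, one_mul,
          add_right_comm, lintegral_add_compl _ hA]

lemma lintegral_stoppedSR (hmeas : ∀ t, Measurable (L t)) (hindep : iIndepFun L P)
    (hτ : Measurable τ) (hτdep : ∀ n : ℕ, DependsOn (fun x => τ x ≤ n) (Set.Iio n))
    (hL : ∀ n, ∫⁻ ω, ENNReal.ofReal (L n ω) ∂P = 1) (n : ℕ) :
    ∫⁻ ω, stoppedSR τ n (fun i => L i ω) ∂P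
      = ∑ k ∈ Finset.range n, P {ω | k < τ (fun i => L i ω)} := by
  induction n with
  | zero => simp [stoppedSR]
  | succ n ih =>
    rw [lintegral_stoppedSR_succ hmeas hindep hτ hτdep (hL n), ih, Finset.sum_range_succ]

end Expectation

/-- **Run length to false alarm lower bound for CuSum.** If `L 0, L 1, …` are i.i.d.
a.s. strictly positive integrable random variables with mean `1` (with `L t` playing the
role of `L_{t+1}`) and `b > 0`, then `E[T] ≥ e^b`. -/
theorem cusum_run_length_lower_bound
    {Ω : Type*} [MeasurableSpace Ω] (P : Measure Ω) [IsProbabilityMeasure P]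
    (L : ℕ → Ω → ℝ) (hmeas : ∀ t, Measurable (L t))
    (hindep : iIndepFun L P)
    (hident : ∀ t, Measure.map (L t) P = Measure.map (L 0) P)
    (hpos : ∀ t, ∀ᵐ ω ∂P, 0 < L t ω)
    (hint : Integrable (L 0) P) (hmean : ∫ ω, L 0 ω ∂P = 1)
    (b : ℝ) (hb : 0 < b) :
    ENNReal.ofReal (Real.exp b) ≤ ∫⁻ ω, (cusumHit L b ω : ℝ≥0∞) ∂P := by
  set τ : (ℕ → ℝ) → ℕ∞ := cusumHit Function.eval b
  have hτ : Measurable τ := measurable_cusumHit measurable_pi_apply b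
  have hX : Measurable fun ω i => L i ω := measurable_pi_lambda _ hmeas
  have hL : ∀ n, ∫⁻ ω, ENNReal.ofReal (L n ω) ∂P = 1 := fun n => by
    rw [← lintegral_map ENNReal.measurable_ofReal (hmeas n), hident n,
      lintegral_map ENNReal.measurable_ofReal (hmeas 0),
      ← ofReal_integral_eq_lintegral_ofReal hint ((hpos 0).mono fun ω h => h.le), hmean,
      ENNReal.ofReal_one]
  have hT : ∀ ω, cusumHit L b ω = τ (fun i => L i ω) :=
    cusumHit_comp Function.eval (fun ω i => L i ω) b
  simp_rw [hT]
  refine le_lintegral_of_forall_mul_measure_le (hτ.comp hX) fun n => ?_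
  calc ENNReal.ofReal (Real.exp b) * P {ω | τ (fun i => L i ω) ≤ n}
      = ∫⁻ _ in {ω | τ (fun i => L i ω) ≤ n}, ENNReal.ofReal (Real.exp b) ∂P :=
        (setLIntegral_const _ _).symm
    _ ≤ ∫⁻ ω in {ω | τ (fun i => L i ω) ≤ n}, stoppedSR τ n (fun i => L i ω) ∂P := by
        refine setLIntegral_mono_ae ((measurable_stoppedSR hτ n).comp hX).aemeasurable ?_
        filter_upwards [ae_all_iff.2 hpos] with ω hω hτω
        exact ofReal_exp_le_stoppedSR_cusumHit hb hω hτω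
    _ ≤ ∫⁻ ω, stoppedSR τ n (fun i => L i ω) ∂P := setLIntegral_le_lintegral _ _
    _ = ∑ k ∈ Finset.range n, P {ω | k < τ (fun i => L i ω)} :=
        lintegral_stoppedSR hmeas hindep hτ (dependsOn_cusumHit_eval_le b) hL n
    _ ≤ ∫⁻ ω, (τ (fun i => L i ω) : ℝ≥0∞) ∂P := sum_measure_lt_le_lintegral (hτ.comp hX) n

end QCDStmt
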